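/- In a finite semigroup, Green's relations D and J coincide: a D b if and only if a J b. -/

import Mathlib

section Green

variable {S : Type*} [Semigroup S]

/-- Green's preorder `≤_L`: `a = c * b` for some `c ∈ S¹`. -/
def leL (a b : S) : Prop := a = b ∨ ∃ c, a = c * b

/-- Green's preorder `≤_R`: `a = b * c` for some `c ∈ S¹`. -/
def leR (a b : S) : Prop := a = b ∨ ∃ c, a = b * c

/-- Green's preorder `≤_J`: `a = c * b * c'` for some `c, c' ∈ S¹`. -/
def leJ (a b : S) : Prop :=
  a = b ∨ (∃ c, a = c * b) ∨ (∃ c, a = b * c) ∨ (∃ c c', a = c * b * c')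

/-- Green's relation `L`. -/
def eqL (a b : S) : Prop := leL a b ∧ leL b a

/-- Green's relation `R`. -/
def eqR (a b : S) : Prop := leR a b ∧ leR b a

/-- Green's relation `H = L ∩ R`. -/
def eqH (a b : S) : Prop := eqL a b ∧ eqR a b

/-- Green's relation `D = L ∘ R`. -/
def eqD (a b : S) : Prop := ∃ c, eqL a c ∧ eqR c b

/-- Green's relation `J`. -/
def eqJ (a b : S) : Prop := leJ a b ∧ leJ b a

/-- `H` is an `H`-class of `S`. -/
def IsHClass (H : Set S) : Prop := ∃ a, H = {b | eqH a b}

/-- `L` is an `L`-class of `S`. -/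
def IsLClass (L : Set S) : Prop := ∃ a, L = {b | eqL a b}

/-- `D` is a `D`-class of `S`. -/
def IsDClass (D : Set S) : Prop := ∃ a, D = {b | eqD a b}

/-- An `H`-class is a group if it is closed under the product and forms a
group with the induced operation. -/
def IsGroupHClass (H : Set S) : Prop :=
  (∀ a ∈ H, ∀ b ∈ H, a * b ∈ H) ∧
  ∃ e ∈ H, e * e = e ∧
    ∀ a ∈ H, e * a = a ∧ a * e = a ∧ ∃ b ∈ H, a * b = e ∧ b * a = e

/-- A regular `D`-class: a `D`-class containing an idempotent. -/
def IsRegularDClass (D : Set S) : Prop := IsDClass D ∧ ∃ e ∈ D, e * e = e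

end Green

/-! If `a = u b v` and `b = x a y` in `S¹`, then `a = (u x) a (y v)`. Pumping this identity up to
idempotent powers `e = (u x)ⁿ` and `f = (y v)ᵐ`, which exist by finiteness, gives `a = e a = a f`.
Hence `x a` is `L`-related to `a`, as `a = (u x)ⁿ⁻¹ u · x a`, and `R`-related to `b`, as
`x a = x a f = b · v (y v)ᵐ⁻¹`. -/

section FiniteMonoid

variable {M : Type*} [Monoid M]

theorem pow_add_mul_eq_of_pow_add_eq {p : M} {i d : ℕ} (h : p ^ (i + d) = p ^ i) {m : ℕ}
    (hm : i ≤ m) (k : ℕ) : p ^ (m + k * d) = p ^ m := by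
  obtain ⟨m, rfl⟩ := Nat.exists_eq_add_of_le hm
  induction k with
  | zero => simp
  | succ k ih =>
    calc p ^ (i + m + (k + 1) * d) = p ^ (i + d) * p ^ (m + k * d) := by rw [← pow_add]; ring_nf
      _ = p ^ (i + m + k * d) := by rw [h, ← pow_add, add_assoc]
      _ = p ^ (i + m) := ih

/-- Pigeonhole gives `p ^ i = p ^ j` with `i < j`; then `n = (i + 1) * (j - i)` is a multiple of
the period `j - i` beyond the preperiod `i`, so `p ^ n` is idempotent. -/
theorem exists_isIdempotentElem_pow [Finite M] (p : M) : ∃ n ≠ 0, IsIdempotentElem (p ^ n) := by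
  obtain ⟨i, j, hne, hij⟩ := Finite.exists_ne_map_eq_of_infinite (fun n : ℕ => p ^ n)
  wlog hlt : i < j generalizing i j
  · exact this j i hne.symm hij.symm (by omega)
  obtain ⟨d, rfl⟩ := Nat.exists_eq_add_of_lt hlt
  refine ⟨(i + 1) * (d + 1), by positivity, ?_⟩
  rw [IsIdempotentElem, ← pow_add]
  exact pow_add_mul_eq_of_pow_add_eq hij.symm (by nlinarith) (i + 1)

theorem eq_pow_mul_mul_pow_of_eq_mul_mul {a p q : M} (h : a = p * a * q) (n : ℕ) :
    a = p ^ n * a * q ^ n := by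
  induction n with
  | zero => simp
  | succ n ih =>
    calc a = p * (p ^ n * a * q ^ n) * q := by rw [← ih, ← h]
      _ = p ^ (n + 1) * a * q ^ (n + 1) := by rw [pow_succ' p, pow_succ q]; simp only [mul_assoc]

theorem exists_pow_mul_eq_of_eq_mul_mul [Finite M] {a p q : M} (h : a = p * a * q) :
    ∃ n ≠ 0, p ^ n * a = a := by
  obtain ⟨n, hn, hidem⟩ := exists_isIdempotentElem_pow p
  have hpump := eq_pow_mul_mul_pow_of_eq_mul_mul h n
  refine ⟨n, hn, ?_⟩
  calc p ^ n * a = p ^ n * (p ^ n * a * q ^ n) := by rw [← hpump]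
    _ = p ^ n * a * q ^ n := by rw [← mul_assoc, ← mul_assoc, hidem.eq]
    _ = a := hpump.symm

theorem exists_mul_pow_eq_of_eq_mul_mul [Finite M] {a p q : M} (h : a = p * a * q) :
    ∃ n ≠ 0, a * q ^ n = a := by
  obtain ⟨n, hn, hidem⟩ := exists_isIdempotentElem_pow q
  have hpump := eq_pow_mul_mul_pow_of_eq_mul_mul h n
  refine ⟨n, hn, ?_⟩
  calc a * q ^ n = p ^ n * a * q ^ n * q ^ n := by rw [← hpump]
    _ = p ^ n * a * q ^ n := by rw [mul_assoc _ (q ^ n), hidem.eq]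
    _ = a := hpump.symm

theorem exists_mul_eq_and_exists_eq_mul_of_eq_mul_mul [Finite M] {a b u v x y : M}
    (hab : a = u * b * v) (hba : b = x * a * y) :
    (∃ s, a = s * (x * a)) ∧ ∃ t, x * a = b * t := by
  have hcycle : a = (u * x) * a * (y * v) :=
    calc a = u * (x * a * y) * v := by rw [← hba]; exact hab
      _ = (u * x) * a * (y * v) := by simp only [mul_assoc]
  obtain ⟨n, hn, hleft⟩ := exists_pow_mul_eq_of_eq_mul_mul hcycle
  obtain ⟨m, hm, hright⟩ := exists_mul_pow_eq_of_eq_mul_mul hcycle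
  constructor
  · refine ⟨(u * x) ^ (n - 1) * u, ?_⟩
    calc a = (u * x) ^ (n - 1) * (u * x) * a := by rw [pow_sub_one_mul hn, hleft]
      _ = (u * x) ^ (n - 1) * u * (x * a) := by simp only [mul_assoc]
  · refine ⟨v * (y * v) ^ (m - 1), ?_⟩
    calc x * a = x * (a * ((y * v) * (y * v) ^ (m - 1))) := by rw [mul_pow_sub_one hm, hright]
      _ = x * a * y * (v * (y * v) ^ (m - 1)) := by simp only [mul_assoc]
      _ = b * (v * (y * v) ^ (m - 1)) := by rw [← hba]

end FiniteMonoid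

section Green

variable {S : Type*} [Semigroup S]

theorem leL_iff_withOne {a b : S} : leL a b ↔ ∃ c : WithOne S, (a : WithOne S) = c * b := by
  simp only [leL, WithOne.exists, one_mul, ← WithOne.coe_mul, WithOne.coe_inj]

theorem leR_iff_withOne {a b : S} : leR a b ↔ ∃ c : WithOne S, (a : WithOne S) = b * c := by
  simp only [leR, WithOne.exists, mul_one, ← WithOne.coe_mul, WithOne.coe_inj]

theorem leJ_iff_withOne {a b : S} :
    leJ a b ↔ ∃ c c' : WithOne S, (a : WithOne S) = c * b * c' := by
  simp only [leJ, WithOne.exists, one_mul, mul_one, ← WithOne.coe_mul, WithOne.coe_inj, exists_or,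
    or_assoc]

theorem WithOne.exists_coe_eq_mul_coe (x : WithOne S) (a : S) : ∃ c : S, (c : WithOne S) = x * a :=
  WithOne.cases_on x ⟨a, (one_mul _).symm⟩ fun s => ⟨s * a, rfl⟩

theorem eqJ_of_eqD {a b : S} (h : eqD a b) : eqJ a b := by
  obtain ⟨c, ⟨hac, hca⟩, hcb, hbc⟩ := h
  obtain ⟨α, hα⟩ := leL_iff_withOne.mp hac
  obtain ⟨β, hβ⟩ := leL_iff_withOne.mp hca
  obtain ⟨γ, hγ⟩ := leR_iff_withOne.mp hcb
  obtain ⟨δ, hδ⟩ := leR_iff_withOne.mp hbc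
  exact ⟨leJ_iff_withOne.mpr ⟨α, γ, by rw [hα, hγ, mul_assoc]⟩,
    leJ_iff_withOne.mpr ⟨β, δ, by rw [hδ, hβ]⟩⟩

theorem eqD_of_eqJ [Finite S] {a b : S} (h : eqJ a b) : eqD a b := by
  have : Finite (WithOne S) := inferInstanceAs (Finite (Option S))
  obtain ⟨u, v, hab⟩ := leJ_iff_withOne.mp h.1
  obtain ⟨x, y, hba⟩ := leJ_iff_withOne.mp h.2
  obtain ⟨c, hc⟩ := WithOne.exists_coe_eq_mul_coe x a
  obtain ⟨hac, hcb⟩ := exists_mul_eq_and_exists_eq_mul_of_eq_mul_mul hab hba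
  rw [← hc] at hac hcb
  exact ⟨c, ⟨leL_iff_withOne.mpr hac, leL_iff_withOne.mpr ⟨x, hc⟩⟩,
    leR_iff_withOne.mpr hcb, leR_iff_withOne.mpr ⟨y, by rw [hba, hc]⟩⟩

end Green

theorem eqD_iff_eqJ {S : Type*} [Semigroup S] [Fintype S] (a b : S) :
    eqD a b ↔ eqJ a b :=
  ⟨eqJ_of_eqD, eqD_of_eqJ⟩
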